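/- arXiv:2411.06470 — 4 statements merged into one kernel-verified Lean document; each statement's English description precedes it below -/
import Mathlib

section
/- In RO(ΠBT²), the subgroup SRO(ΠBT²) consists exactly of the classes of elements a·1 + b·σ + m₀₀Ω₀₀ + m₀₁Ω₀₁ + m₁₀Ω₁₀ + m₁₁Ω₁₁ with m₀₀ + m₁₁ = m₀₁ + m₁₀. Equivalently: the assignment 1 ↦ 0, σ ↦ 0, Ω₀₀ ↦ 1, Ω₁₁ ↦ 1, Ω₀₁ ↦ −1, Ω₁₀ ↦ −1 descends to a well-defined group homomorphism f : RO(ΠBT²) → ℤ, and SRO(ΠBT²) equals the kernel of f. -/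
noncomputable section

namespace BT2

/-- The free abelian group on the six generators `1, σ, Ω₀₀, Ω₀₁, Ω₁₀, Ω₁₁`
(indexed `0, 1, 2, 3, 4, 5`). -/
abbrev F6 : Type := Fin 6 →₀ ℤ

/-- The relation `Ω₀₀ + Ω₀₁ + Ω₁₀ + Ω₁₁ − 2σ + 2·1`. -/
def rel : F6 :=
  Finsupp.single 2 1 + Finsupp.single 3 1 + Finsupp.single 4 1 + Finsupp.single 5 1
    - 2 • Finsupp.single 1 1 + 2 • Finsupp.single 0 1

/-- The subgroup generated by the relation. -/
def relSub : AddSubgroup F6 := AddSubgroup.closure {rel}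

/-- `RO(ΠBT²)`, the quotient of the free abelian group on `1, σ, Ω₀₀, Ω₀₁, Ω₁₀, Ω₁₁`
by the relation `Ω₀₀ + Ω₀₁ + Ω₁₀ + Ω₁₁ = 2σ − 2·1`. -/
abbrev RO2 : Type := F6 ⧸ relSub

/-- The quotient map. -/
def mk2 : F6 →+ RO2 := QuotientAddGroup.mk' relSub

/-- `SRO(ΠBT²)`, the subgroup of `RO(ΠBT²)` generated by the classes of
`1`, `σ`, `Ω₀₀ + Ω₀₁`, `Ω₁₀ + Ω₁₁`, `Ω₀₀ + Ω₁₀` and `Ω₀₁ + Ω₁₁`. -/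
def SRO2 : AddSubgroup RO2 :=
  AddSubgroup.closure
    { mk2 (Finsupp.single 0 1), mk2 (Finsupp.single 1 1),
      mk2 (Finsupp.single 2 1 + Finsupp.single 3 1),
      mk2 (Finsupp.single 4 1 + Finsupp.single 5 1),
      mk2 (Finsupp.single 2 1 + Finsupp.single 4 1),
      mk2 (Finsupp.single 3 1 + Finsupp.single 5 1) }

/-- `SRO(ΠBT²)` consists exactly of the classes of elements
`a·1 + b·σ + m₀₀Ω₀₀ + m₀₁Ω₀₁ + m₁₀Ω₁₀ + m₁₁Ω₁₁` with `m₀₀ + m₁₁ = m₀₁ + m₁₀`.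
Equivalently, the assignment `1 ↦ 0, σ ↦ 0, Ω₀₀ ↦ 1, Ω₁₁ ↦ 1, Ω₀₁ ↦ −1, Ω₁₀ ↦ −1`
descends to a well-defined homomorphism `f : RO(ΠBT²) → ℤ` with `SRO(ΠBT²) = ker f`.

The counting homomorphism `v ↦ v 2 + v 5 - v 3 - v 4` on the free group. -/
def g6 : F6 →+ ℤ :=
  Finsupp.applyAddHom (2 : Fin 6) + Finsupp.applyAddHom 5
    - Finsupp.applyAddHom 3 - Finsupp.applyAddHom 4

lemma g6_apply (v : F6) : g6 v = v 2 + v 5 - v 3 - v 4 := by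
  simp [g6, sub_eq_add_neg]

lemma relSub_le_ker : relSub ≤ g6.ker := by
  rw [relSub, AddSubgroup.closure_le]
  intro x hx
  simp only [Set.mem_singleton_iff] at hx
  subst hx
  simp [AddMonoidHom.mem_ker, g6_apply, rel, Finsupp.single_apply]

/-- The descended homomorphism on the quotient. -/
def f2 : RO2 →+ ℤ :=
  QuotientAddGroup.lift relSub g6 relSub_le_ker

lemma f2_mk2 (v : F6) : f2 (mk2 v) = g6 v := rfl

lemma SRO2_le_ker : SRO2 ≤ f2.ker := by
  rw [SRO2, AddSubgroup.closure_le]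
  intro x hx
  simp only [Set.mem_insert_iff, Set.mem_singleton_iff] at hx
  rcases hx with h|h|h|h|h|h <;> subst h <;>
    simp [AddMonoidHom.mem_ker, f2_mk2, g6_apply, Finsupp.single_apply]

/-- `SRO(ΠBT²)` consists of the classes with `m₀₀ + m₁₁ = m₀₁ + m₁₀`. -/
lemma mem_SRO2_of (v : F6) (h : v 2 + v 5 = v 3 + v 4) : mk2 v ∈ SRO2 := by
  have hv : v = v 0 • Finsupp.single 0 1 + v 1 • Finsupp.single 1 1
      + v 2 • (Finsupp.single 2 1 + Finsupp.single 3 1)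
      + v 4 • (Finsupp.single 4 1 + Finsupp.single 5 1)
      + (v 3 - v 2) • (Finsupp.single 3 1 + Finsupp.single 5 1) := by
    ext i
    fin_cases i <;>
      (simp [Finsupp.single_apply]; try omega)
  rw [hv]
  simp only [map_add, map_zsmul]
  refine add_mem (add_mem (add_mem (add_mem ?_ ?_) ?_) ?_) ?_ <;>
    exact zsmul_mem (AddSubgroup.subset_closure (by simp [SRO2]; try tauto)) _

/-- `SRO(ΠBT²)` consists exactly of the classes of elements
`a·1 + b·σ + m₀₀Ω₀₀ + m₀₁Ω₀₁ + m₁₀Ω₁₀ + m₁₁Ω₁₁` with `m₀₀ + m₁₁ = m₀₁ + m₁₀`.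
Equivalently, the assignment `1 ↦ 0, σ ↦ 0, Ω₀₀ ↦ 1, Ω₁₁ ↦ 1, Ω₀₁ ↦ −1, Ω₁₀ ↦ −1`
descends to a well-defined homomorphism `f : RO(ΠBT²) → ℤ` with `SRO(ΠBT²) = ker f`. -/
theorem SRO2_eq_ker :
    (∀ v : F6, mk2 v ∈ SRO2 ↔ v 2 + v 5 = v 3 + v 4) ∧
    ∃ f : RO2 →+ ℤ,
      f (mk2 (Finsupp.single 0 1)) = 0 ∧
      f (mk2 (Finsupp.single 1 1)) = 0 ∧
      f (mk2 (Finsupp.single 2 1)) = 1 ∧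
      f (mk2 (Finsupp.single 5 1)) = 1 ∧
      f (mk2 (Finsupp.single 3 1)) = -1 ∧
      f (mk2 (Finsupp.single 4 1)) = -1 ∧
      SRO2 = f.ker := by
  constructor
  · intro v
    constructor
    · intro hv
      have h0 : f2 (mk2 v) = 0 := SRO2_le_ker hv
      rw [f2_mk2, g6_apply] at h0
      omega
    · exact mem_SRO2_of v
  · refine ⟨f2, ?_, ?_, ?_, ?_, ?_, ?_, ?_⟩
    · simp [f2_mk2, g6_apply, Finsupp.single_apply]
    · simp [f2_mk2, g6_apply, Finsupp.single_apply]
    · simp [f2_mk2, g6_apply, Finsupp.single_apply]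
    · simp [f2_mk2, g6_apply, Finsupp.single_apply]
    · simp [f2_mk2, g6_apply, Finsupp.single_apply]
    · simp [f2_mk2, g6_apply, Finsupp.single_apply]
    · refine le_antisymm SRO2_le_ker ?_
      intro x hx
      obtain ⟨v, rfl⟩ := QuotientAddGroup.mk'_surjective relSub x
      have h0 : f2 (mk2 v) = 0 := hx
      rw [f2_mk2, g6_apply] at h0
      exact mem_SRO2_of v (by omega)

end BT2

end
end

section
/- The quotient group RO(ΠBT²)/SRO(ΠBT²) is isomorphic to ℤ. Moreover, the class of the element 2·1 + Ω₀₁ + Ω₁₀ (the grading of the tensor product ω₁⊗ω₂ of the two tautological line bundles over BT²) does not lie in SRO(ΠBT²). -/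
noncomputable section

namespace BT2

/-! The signs `(+, −, −, +)` on `Ω₀₀, Ω₀₁, Ω₁₀, Ω₁₁` define a functional on the free group
that kills the relation and all six generators of `SRO(ΠBT²)`, and conversely everything it
kills is an integer combination of those generators. So it descends to an isomorphism
`RO(ΠBT²)/SRO(ΠBT²) ≅ ℤ`; it takes the value `−2` on `2·1 + Ω₀₁ + Ω₁₀`. -/

def phi : F6 →+ ℤ :=
  Finsupp.applyAddHom 2 - Finsupp.applyAddHom 3 - Finsupp.applyAddHom 4 + Finsupp.applyAddHom 5

lemma phi_apply (x : F6) : phi x = x 2 - x 3 - x 4 + x 5 := by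
  simp [phi]

lemma relSub_le_ker_phi : relSub ≤ phi.ker := by
  rw [relSub, AddSubgroup.closure_le, Set.singleton_subset_iff]
  simp [phi_apply, rel]

def chi : RO2 →+ ℤ := QuotientAddGroup.lift relSub phi relSub_le_ker_phi

lemma chi_mk2 (x : F6) : chi (mk2 x) = phi x := rfl

lemma chi_surjective : Function.Surjective chi := fun n =>
  ⟨mk2 (n • Finsupp.single 2 1), by simp [chi_mk2, phi_apply]⟩

lemma SRO2_le_ker_chi : SRO2 ≤ chi.ker := by
  rw [SRO2, AddSubgroup.closure_le]
  intro y hy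
  simp only [Set.mem_insert_iff, Set.mem_singleton_iff] at hy
  rcases hy with rfl | rfl | rfl | rfl | rfl | rfl <;>
    simp [chi_mk2, phi_apply]

lemma eq_sum_SRO2_generators_of_phi_eq_zero {x : F6} (hx : phi x = 0) :
    x = x 0 • Finsupp.single 0 1 + x 1 • Finsupp.single 1 1
      + x 2 • (Finsupp.single 2 1 + Finsupp.single 3 1)
      + x 4 • (Finsupp.single 4 1 + Finsupp.single 5 1)
      + (x 3 - x 2) • (Finsupp.single 3 1 + Finsupp.single 5 1) := by
  rw [phi_apply] at hx
  ext i
  fin_cases i <;> simp; omega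

lemma ker_chi_le_SRO2 : chi.ker ≤ SRO2 := by
  intro y hy
  obtain ⟨x, rfl⟩ := QuotientAddGroup.mk'_surjective relSub y
  change phi x = 0 at hy
  change mk2 x ∈ SRO2
  rw [eq_sum_SRO2_generators_of_phi_eq_zero hy]
  simp only [map_add, map_zsmul]
  refine add_mem (add_mem (add_mem (add_mem ?_ ?_) ?_) ?_) ?_ <;>
    exact zsmul_mem (AddSubgroup.subset_closure (by simp)) _

lemma SRO2_eq_ker_chi : SRO2 = chi.ker :=
  le_antisymm SRO2_le_ker_chi ker_chi_le_SRO2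

/-- The quotient `RO(ΠBT²)/SRO(ΠBT²)` is isomorphic to `ℤ`, and the class of
`2·1 + Ω₀₁ + Ω₁₀` (the grading of `ω₁⊗ω₂`) does not lie in `SRO(ΠBT²)`. -/
theorem RO2_quot_SRO2 :
    Nonempty ((RO2 ⧸ SRO2) ≃+ ℤ) ∧
    mk2 (2 • Finsupp.single 0 1 + Finsupp.single 3 1 + Finsupp.single 4 1) ∉ SRO2 := by
  refine ⟨⟨(QuotientAddGroup.quotientAddEquivOfEq SRO2_eq_ker_chi).trans
    (QuotientAddGroup.quotientKerEquivOfSurjective chi chi_surjective)⟩, fun h => ?_⟩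
  have hchi := SRO2_le_ker_chi h
  simp [chi_mk2, phi_apply] at hchi

end BT2

end
end

section
/- The images of 1, G, E₁, E₂, E₃ in R form a basis of R as a ℤ-module; in particular, the underlying additive group of R is free abelian of rank 5. -/
/-!
The relations write every product of two of `1, G, E₁, E₂, E₃` as an integer multiple of one of
them, so their `ℤ`-span is a subalgebra; it contains the generators, hence is all of `R`.
For independence, evaluation at the five integral points `0, (2,0,0,0), (0,2,0,0), (0,0,2,0),
(0,2,2,2)` kills the relations and so gives ring maps `R → ℤ` (the marks); the table of marks
of `1, G, E₁, E₂, E₃` is upper triangular with determinant `16 ≠ 0`.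
-/

noncomputable section

open MvPolynomial

namespace BT2Deg0

/-- The defining ideal of `R = ℤ[G, E₁, E₂, E₃] / (G² − 2G, G·Eᵢ, Eᵢ² − 2Eᵢ,
E₁E₂ − 2E₃, E₁E₃ − 2E₃, E₂E₃ − 2E₃)`, with `G = X 0`, `E₁ = X 1`, `E₂ = X 2`,
`E₃ = X 3`. -/
def I0 : Ideal (MvPolynomial (Fin 4) ℤ) :=
  Ideal.span
    { X 0 ^ 2 - 2 * X 0, X 0 * X 1, X 0 * X 2, X 0 * X 3,
      X 1 ^ 2 - 2 * X 1, X 2 ^ 2 - 2 * X 2, X 3 ^ 2 - 2 * X 3,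
      X 1 * X 2 - 2 * X 3, X 1 * X 3 - 2 * X 3, X 2 * X 3 - 2 * X 3 }

/-- The ring `R`, which is the degree-zero part `H⁰_{C₂}(BT²₊)` of the
`RO(ΠBT²)`-graded `C₂`-equivariant ordinary cohomology of `BT²`. -/
abbrev R0 : Type := MvPolynomial (Fin 4) ℤ ⧸ I0

/-- `G`, corresponding to the class `g`. -/
def G : R0 := Ideal.Quotient.mk I0 (X 0)

/-- `E₁`, corresponding to `ε₁ = e⁻²κ·ζ₀₀ζ₀₁c_{ω₁}`. -/
def E1 : R0 := Ideal.Quotient.mk I0 (X 1)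

/-- `E₂`, corresponding to `ε₂ = e⁻²κ·ζ₀₀ζ₁₀c_{ω₂}`. -/
def E2 : R0 := Ideal.Quotient.mk I0 (X 2)

/-- `E₃`, corresponding to `ε_⊕ = e⁻⁴κ·ζ₀₀²ζ₀₁ζ₁₀c_{ω₁}c_{ω₂}`. -/
def E3 : R0 := Ideal.Quotient.mk I0 (X 3)

theorem _root_.Submodule.span_eq_top_of_mul_mem {R A : Type*} [CommSemiring R] [Semiring A]
    [Algebra R A] {s : Set A} (hs : Algebra.adjoin R s = ⊤) (one_mem : 1 ∈ Submodule.span R s)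
    (mul_mem : ∀ x ∈ s, ∀ y ∈ s, x * y ∈ Submodule.span R s) : Submodule.span R s = ⊤ := by
  have mul_le : Submodule.span R s * Submodule.span R s ≤ Submodule.span R s := by
    rw [Submodule.span_mul_span, Submodule.span_le]
    rintro _ ⟨x, hx, y, hy, rfl⟩
    exact mul_mem x hx y hy
  let B : Subalgebra R A := (Submodule.span R s).toSubalgebra one_mem
    fun _ _ hx hy => mul_le (Submodule.mul_mem_mul hx hy)
  have top_le : (⊤ : Subalgebra R A) ≤ B := hs ▸ Algebra.adjoin_le Submodule.subset_span
  exact eq_top_iff.2 fun x _ => top_le Algebra.mem_top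

theorem _root_.MvPolynomial.adjoin_range_mk_X {σ R : Type*} [CommRing R]
    (I : Ideal (MvPolynomial σ R)) :
    Algebra.adjoin R (Set.range fun i => Ideal.Quotient.mk I (X i)) = ⊤ := by
  have : (aeval fun i => Ideal.Quotient.mk I (X i)) = Ideal.Quotient.mkₐ R I :=
    algHom_ext fun i => by simp
  rw [Algebra.adjoin_range_eq_range_aeval, this]
  exact (AlgHom.range_eq_top _).2 (Ideal.Quotient.mkₐ_surjective R I)

theorem mul_table :
    G * G = 2 * G ∧ G * E1 = 0 ∧ G * E2 = 0 ∧ G * E3 = 0 ∧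
      E1 * E1 = 2 * E1 ∧ E2 * E2 = 2 * E2 ∧ E3 * E3 = 2 * E3 ∧
      E1 * E2 = 2 * E3 ∧ E1 * E3 = 2 * E3 ∧ E2 * E3 = 2 * E3 := by
  have h : ∀ p ∈ _, Ideal.Quotient.mk I0 p = 0 := fun p hp =>
    Ideal.Quotient.eq_zero_iff_mem.2 (Ideal.subset_span hp)
  simp only [Set.forall_mem_insert, Set.mem_singleton_iff, forall_eq, map_sub, map_mul,
    map_ofNat, sq, sub_eq_zero] at h
  exact h

theorem span_eq_top : Submodule.span ℤ (Set.range ![1, G, E1, E2, E3]) = ⊤ := by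
  obtain ⟨hGG, hGE1, hGE2, hGE3, hE11, hE22, hE33, hE12, hE13, hE23⟩ := mul_table
  have two_mul_mem : ∀ (s : Set R0), ∀ x ∈ s, 2 * x ∈ Submodule.span ℤ s := fun s x hx => by
    rw [two_mul]; exact add_mem (Submodule.subset_span hx) (Submodule.subset_span hx)
  refine Submodule.span_eq_top_of_mul_mem ?_ (Submodule.subset_span ⟨0, rfl⟩) ?_
  · refine eq_top_iff.2 ((MvPolynomial.adjoin_range_mk_X I0).ge.trans (Algebra.adjoin_mono ?_))
    rintro _ ⟨i, rfl⟩
    exact ⟨i.succ, by fin_cases i <;> rfl⟩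
  · simp [hGG, hGE1, hGE2, hGE3, hE11, hE22, hE33, hE12, hE13, hE23,
      mul_comm E1 G, mul_comm E2 G, mul_comm E3 G, mul_comm E2 E1, mul_comm E3 E1, mul_comm E3 E2,
      two_mul_mem, Submodule.mem_span_of_mem]

def markPoint : Fin 5 → Fin 4 → ℤ :=
  ![0, ![2, 0, 0, 0], ![0, 2, 0, 0], ![0, 0, 2, 0], ![0, 2, 2, 2]]

theorem I0_le_ker_eval_markPoint : I0 ≤ RingHom.ker (RingHom.pi fun j => eval (markPoint j)) := by
  rw [I0, Ideal.span_le]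
  simp [Set.insert_subset_iff, funext_iff, Fin.forall_fin_succ, markPoint]

def marks : R0 →+* (Fin 5 → ℤ) :=
  Ideal.Quotient.lift I0 _ I0_le_ker_eval_markPoint

theorem marks_table :
    Matrix.of (fun i => marks (![1, G, E1, E2, E3] i)) =
      !![1, 1, 1, 1, 1; 0, 2, 0, 0, 0; 0, 0, 2, 0, 2; 0, 0, 0, 2, 2; 0, 0, 0, 0, 2] := by
  ext i j
  fin_cases i <;> fin_cases j <;> simp [marks, G, E1, E2, E3, markPoint]

theorem linearIndependent : LinearIndependent ℤ ![1, G, E1, E2, E3] := by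
  have upper : (!![1, 1, 1, 1, 1; 0, 2, 0, 0, 0; 0, 0, 2, 0, 2; 0, 0, 0, 2, 2; 0, 0, 0, 0, 2] :
      Matrix (Fin 5) (Fin 5) ℤ).IsUpperTriangular := by
    intro i j h; fin_cases i <;> fin_cases j <;> simp_all
  have det_ne_zero : (Matrix.of fun i => marks (![1, G, E1, E2, E3] i)).det ≠ 0 := by
    rw [marks_table, Matrix.det_of_isUpperTriangular upper]
    simp [Fin.prod_univ_five]
  exact (Matrix.linearIndependent_rows_of_det_ne_zero det_ne_zero).of_comp
    marks.toIntAlgHom.toLinearMap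

/-- The images of `1, G, E₁, E₂, E₃` in `R` form a `ℤ`-basis of `R`;
in particular `R` is a free abelian group of rank 5. -/
theorem basis_R0 :
    (∃ b : Module.Basis (Fin 5) ℤ R0, ∀ i, b i = (![1, G, E1, E2, E3] : Fin 5 → R0) i) ∧
    Module.Free ℤ R0 ∧ Module.finrank ℤ R0 = 5 := by
  let b : Module.Basis (Fin 5) ℤ R0 := Module.Basis.mk linearIndependent span_eq_top.ge
  refine ⟨⟨b, Module.Basis.mk_apply _ _⟩, Module.Free.of_basis b, ?_⟩
  rw [Module.finrank_eq_card_basis b, Fintype.card_fin]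

end BT2Deg0

end
end

section
/- An element u of R is a unit if and only if u = ±(1 − G)^{a₀}(1 − E₁)^{a₁}(1 − E₂)^{a₂}(1 − E₃)^{a₃} for some a₀, a₁, a₂, a₃ ∈ {0, 1}; moreover these 32 elements are pairwise distinct, so the group of units of R has order exactly 32. (Under the dictionary of the paper, −(1 − G) = 1 − κ, so these correspond to the units ±(1 − κ)^{a₀}(1 − ε₁)^{a₁}(1 − ε₂)^{a₂}(1 − ε_⊕)^{a₃} of the equivariant cohomology ring of BT².) -/
noncomputable section

open MvPolynomial

namespace BT2Deg0

/-- The signed product `±(1 − G)^{a₀}(1 − E₁)^{a₁}(1 − E₂)^{a₂}(1 − E₃)^{a₃}`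
associated to a sign and exponents `a₀, a₁, a₂, a₃ ∈ {0, 1}`. -/
def signedUnit (t : Bool × Fin 2 × Fin 2 × Fin 2 × Fin 2) : R0 :=
  (if t.1 then 1 else -1) * (1 - G) ^ (t.2.1 : ℕ) * (1 - E1) ^ (t.2.2.1 : ℕ) *
    (1 - E2) ^ (t.2.2.2.1 : ℕ) * (1 - E3) ^ (t.2.2.2.2 : ℕ)

/-!
Evaluating at the five ring homomorphisms `R → ℤ` embeds `R` into `ℤ⁵`, because `R` is
spanned over `ℤ` by `1, G, E₁, E₂, E₃`, whose images are linearly independent. Hence `Rˣ`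
embeds into `(ℤ⁵)ˣ = {±1}⁵`, a group of order 32. Each of `G, E₁, E₂, E₃` satisfies
`x² = 2x`, so `1 - x` is an involution and all 32 signed products are units; their images in
`{±1}⁵` are pairwise distinct, so they exhaust `Rˣ`.
-/

theorem one_sub_mul_self_eq_one {A : Type*} [Ring A] {x : A} (h : x * x = 2 * x) :
    (1 - x) * (1 - x) = 1 := by
  rw [sub_mul, mul_sub, mul_sub, h, one_mul, one_mul, mul_one, two_mul]
  abel

theorem G_mul_self : G * G = 2 * G := by
  have h : (X 0 ^ 2 - 2 * X 0 : MvPolynomial (Fin 4) ℤ) ∈ I0 := Ideal.subset_span (by simp)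
  simpa [G, sq, sub_eq_zero, map_ofNat] using Ideal.Quotient.eq_zero_iff_mem.2 h

theorem G_mul_E1 : G * E1 = 0 := by
  have h : (X 0 * X 1 : MvPolynomial (Fin 4) ℤ) ∈ I0 := Ideal.subset_span (by simp)
  simpa [G, E1] using Ideal.Quotient.eq_zero_iff_mem.2 h

theorem G_mul_E2 : G * E2 = 0 := by
  have h : (X 0 * X 2 : MvPolynomial (Fin 4) ℤ) ∈ I0 := Ideal.subset_span (by simp)
  simpa [G, E2] using Ideal.Quotient.eq_zero_iff_mem.2 h

theorem G_mul_E3 : G * E3 = 0 := by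
  have h : (X 0 * X 3 : MvPolynomial (Fin 4) ℤ) ∈ I0 := Ideal.subset_span (by simp)
  simpa [G, E3] using Ideal.Quotient.eq_zero_iff_mem.2 h

theorem E1_mul_self : E1 * E1 = 2 * E1 := by
  have h : (X 1 ^ 2 - 2 * X 1 : MvPolynomial (Fin 4) ℤ) ∈ I0 := Ideal.subset_span (by simp)
  simpa [E1, sq, sub_eq_zero, map_ofNat] using Ideal.Quotient.eq_zero_iff_mem.2 h

theorem E2_mul_self : E2 * E2 = 2 * E2 := by
  have h : (X 2 ^ 2 - 2 * X 2 : MvPolynomial (Fin 4) ℤ) ∈ I0 := Ideal.subset_span (by simp)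
  simpa [E2, sq, sub_eq_zero, map_ofNat] using Ideal.Quotient.eq_zero_iff_mem.2 h

theorem E3_mul_self : E3 * E3 = 2 * E3 := by
  have h : (X 3 ^ 2 - 2 * X 3 : MvPolynomial (Fin 4) ℤ) ∈ I0 := Ideal.subset_span (by simp)
  simpa [E3, sq, sub_eq_zero, map_ofNat] using Ideal.Quotient.eq_zero_iff_mem.2 h

theorem E1_mul_E2 : E1 * E2 = 2 * E3 := by
  have h : (X 1 * X 2 - 2 * X 3 : MvPolynomial (Fin 4) ℤ) ∈ I0 := Ideal.subset_span (by simp)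
  simpa [E1, E2, E3, sub_eq_zero, map_ofNat] using Ideal.Quotient.eq_zero_iff_mem.2 h

theorem E1_mul_E3 : E1 * E3 = 2 * E3 := by
  have h : (X 1 * X 3 - 2 * X 3 : MvPolynomial (Fin 4) ℤ) ∈ I0 := Ideal.subset_span (by simp)
  simpa [E1, E3, sub_eq_zero, map_ofNat] using Ideal.Quotient.eq_zero_iff_mem.2 h

theorem E2_mul_E3 : E2 * E3 = 2 * E3 := by
  have h : (X 2 * X 3 - 2 * X 3 : MvPolynomial (Fin 4) ℤ) ∈ I0 := Ideal.subset_span (by simp)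
  simpa [E2, E3, sub_eq_zero, map_ofNat] using Ideal.Quotient.eq_zero_iff_mem.2 h

theorem exists_eq_int_combination (u : R0) :
    ∃ a b c d e : ℤ, u = a + b * G + c * E1 + d * E2 + e * E3 := by
  obtain ⟨p, rfl⟩ := Ideal.Quotient.mk_surjective u
  induction p using MvPolynomial.induction_on with
  | C a => exact ⟨a, 0, 0, 0, 0, by simp⟩
  | add p q hp hq =>
    obtain ⟨a, b, c, d, e, hp⟩ := hp
    obtain ⟨a', b', c', d', e', hq⟩ := hq
    exact ⟨a + a', b + b', c + c', d + d', e + e', by rw [map_add, hp, hq]; push_cast; ring⟩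
  | mul_X p i hp =>
    obtain ⟨a, b, c, d, e, hp⟩ := hp
    rw [map_mul, hp]
    fin_cases i
    · refine ⟨0, a + 2 * b, 0, 0, 0, ?_⟩
      change _ * G = _
      push_cast
      linear_combination (b : R0) * G_mul_self + c * G_mul_E1 + d * G_mul_E2 + e * G_mul_E3
    · refine ⟨0, 0, a + 2 * c, 0, 2 * d + 2 * e, ?_⟩
      change _ * E1 = _
      push_cast
      linear_combination (b : R0) * G_mul_E1 + c * E1_mul_self + d * E1_mul_E2 + e * E1_mul_E3
    · refine ⟨0, 0, 0, a + 2 * d, 2 * c + 2 * e, ?_⟩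
      change _ * E2 = _
      push_cast
      linear_combination (b : R0) * G_mul_E2 + c * E1_mul_E2 + d * E2_mul_self + e * E2_mul_E3
    · refine ⟨0, 0, 0, 0, a + 2 * c + 2 * d + 2 * e, ?_⟩
      change _ * E3 = _
      push_cast
      linear_combination (b : R0) * G_mul_E3 + c * E1_mul_E3 + d * E2_mul_E3 + e * E3_mul_self

/-- The values of `(G, E₁, E₂, E₃)` under the five ring homomorphisms `R → ℤ`. -/
def ghostPoints : Fin 5 → Fin 4 → ℤ :=
  ![![0, 0, 0, 0], ![2, 0, 0, 0], ![0, 2, 0, 0], ![0, 0, 2, 0], ![0, 2, 2, 2]]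

def ghost : R0 →+* (Fin 5 → ℤ) :=
  Ideal.Quotient.lift I0 (RingHom.pi fun i => eval (ghostPoints i)) <| by
    intro p hp
    refine (Ideal.span_le (I := RingHom.ker _)).2 ?_ hp
    intro q hq
    simp only [Set.mem_insert_iff, Set.mem_singleton_iff] at hq
    rcases hq with rfl | rfl | rfl | rfl | rfl | rfl | rfl | rfl | rfl | rfl <;>
      · ext i; fin_cases i <;> simp [ghostPoints, RingHom.pi_apply]

theorem ghost_G : ghost G = ![0, 2, 0, 0, 0] := by
  ext i; fin_cases i <;> simp [ghost, G, ghostPoints, RingHom.pi_apply]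

theorem ghost_E1 : ghost E1 = ![0, 0, 2, 0, 2] := by
  ext i; fin_cases i <;> simp [ghost, E1, ghostPoints, RingHom.pi_apply]

theorem ghost_E2 : ghost E2 = ![0, 0, 0, 2, 2] := by
  ext i; fin_cases i <;> simp [ghost, E2, ghostPoints, RingHom.pi_apply]

theorem ghost_E3 : ghost E3 = ![0, 0, 0, 0, 2] := by
  ext i; fin_cases i <;> simp [ghost, E3, ghostPoints, RingHom.pi_apply]

theorem ghost_injective : Function.Injective ghost := by
  rw [injective_iff_map_eq_zero]
  intro u hu
  obtain ⟨a, b, c, d, e, rfl⟩ := exists_eq_int_combination u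
  have hcoord (i : Fin 5) :
      a + b * ghost G i + c * ghost E1 i + d * ghost E2 i + e * ghost E3 i = 0 := by
    simpa using congrFun hu i
  have h0 := hcoord 0
  have h1 := hcoord 1
  have h2 := hcoord 2
  have h3 := hcoord 3
  have h4 := hcoord 4
  simp [ghost_G, ghost_E1, ghost_E2, ghost_E3] at h0 h1 h2 h3 h4
  obtain ⟨rfl, rfl, rfl, rfl, rfl⟩ : a = 0 ∧ b = 0 ∧ c = 0 ∧ d = 0 ∧ e = 0 := by omega
  simp

theorem piUnits_comp_units_map_ghost_injective :
    Function.Injective (MulEquiv.piUnits ∘ Units.map (ghost : R0 →* (Fin 5 → ℤ))) :=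
  MulEquiv.piUnits.injective.comp (Units.map_injective ghost_injective)

instance : Finite R0ˣ := Finite.of_injective _ piUnits_comp_units_map_ghost_injective

theorem nat_card_units_le : Nat.card R0ˣ ≤ 32 := by
  simpa [Nat.card_eq_fintype_card, Fintype.card_units_int] using
    Nat.card_le_card_of_injective _ piUnits_comp_units_map_ghost_injective

theorem isUnit_signedUnit (t : Bool × Fin 2 × Fin 2 × Fin 2 × Fin 2) : IsUnit (signedUnit t) := by
  have hsign : IsUnit (if t.1 then (1 : R0) else -1) := by
    split_ifs
    exacts [isUnit_one, isUnit_one.neg (α := R0)]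
  have hinv {x : R0} (h : x * x = 2 * x) : IsUnit (1 - x) :=
    IsUnit.of_mul_eq_one _ (one_sub_mul_self_eq_one h)
  exact (((hsign.mul ((hinv G_mul_self).pow _)).mul ((hinv E1_mul_self).pow _)).mul
    ((hinv E2_mul_self).pow _)).mul ((hinv E3_mul_self).pow _)

theorem signedUnit_injective : Function.Injective signedUnit := by
  have hghost : ghost ∘ signedUnit = fun t => (if t.1 then 1 else -1) *
      (1 - ![0, 2, 0, 0, 0]) ^ (t.2.1 : ℕ) * (1 - ![0, 0, 2, 0, 2]) ^ (t.2.2.1 : ℕ) *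
      (1 - ![0, 0, 0, 2, 2]) ^ (t.2.2.2.1 : ℕ) * (1 - ![0, 0, 0, 0, 2]) ^ (t.2.2.2.2 : ℕ) := by
    ext t : 1
    simp only [Function.comp_apply, signedUnit, map_mul, map_pow, map_sub, map_one, ghost_G,
      ghost_E1, ghost_E2, ghost_E3, apply_ite ghost, map_neg]
  refine Function.Injective.of_comp (f := ghost) ?_
  rw [hghost]
  decide

/-- An element `u` of `R` is a unit if and only if
`u = ±(1 − G)^{a₀}(1 − E₁)^{a₁}(1 − E₂)^{a₂}(1 − E₃)^{a₃}` with each `aᵢ ∈ {0, 1}`;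
these 32 elements are pairwise distinct, so `R` has exactly 32 units. -/
theorem units_R0 :
    (∀ u : R0, IsUnit u ↔ ∃ t : Bool × Fin 2 × Fin 2 × Fin 2 × Fin 2, u = signedUnit t) ∧
    Function.Injective signedUnit ∧
    Nat.card R0ˣ = 32 := by
  set f : Bool × Fin 2 × Fin 2 × Fin 2 × Fin 2 → R0ˣ := fun t => (isUnit_signedUnit t).unit
  have hf : Function.Bijective f := by
    refine Function.Injective.bijective_of_nat_card_le
      (fun t s h => signedUnit_injective (congrArg Units.val h)) ?_
    simpa using nat_card_units_le
  refine ⟨fun u => ⟨fun hu => ?_, ?_⟩, signedUnit_injective, ?_⟩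
  · obtain ⟨t, ht⟩ := hf.2 hu.unit
    exact ⟨t, congrArg Units.val ht.symm⟩
  · rintro ⟨t, rfl⟩
    exact isUnit_signedUnit t
  · rw [← Nat.card_eq_of_bijective f hf]
    simp

end BT2Deg0

end
end
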